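/- For every integer m ≥ 2, the product {2}·{m} divides {m+2}·{2m} in Z[s,t], and the quotient {m+2}{2m}/({2}{m}) — the Lucas–Coxeter–Catalan analogue for the dihedral Coxeter group I_2(m) — is a polynomial in s and t all of whose coefficients are nonnegative integers. -/

import Mathlib

open MvPolynomial Finset

noncomputable section

/-- Polynomial ring ℤ[s,t] with s = X 0, t = X 1. -/
abbrev P2 : Type := MvPolynomial (Fin 2) ℤ

def ps : P2 := X 0
def pt : P2 := X 1

/-- The Lucas sequence of polynomials: {0}=0, {1}=1, {n}=s{n-1}+t{n-2}. -/
def lucas : ℕ → P2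
  | 0 => 0
  | 1 => 1
  | (n+2) => ps * lucas (n+1) + pt * lucas n

/-- The Lucastorial {n}! = {1}{2}⋯{n}. -/
def lucasFact (n : ℕ) : P2 := ∏ i ∈ Finset.range n, lucas (i+1)

/-- The d-divisible Lucastorial {n:d}! = {d}{2d}⋯{nd}. -/
def lucasFactD (d n : ℕ) : P2 := ∏ i ∈ Finset.range n, lucas (d*(i+1))

/-- A polynomial lies in ℕ[s,t]: all coefficients are nonnegative. -/
def Nonneg (p : P2) : Prop := ∀ m, 0 ≤ p.coeff m

/-- The fraction field ℤ(s,t). -/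
abbrev K : Type := FractionRing P2

def φ : P2 →+* K := algebraMap P2 K

def L (n : ℕ) : K := φ (lucas n)

def LFact (n : ℕ) : K := φ (lucasFact n)

def LFactD (d n : ℕ) : K := φ (lucasFactD d n)

/-- The Lucasnomial {n choose k}, as an element of the fraction field. -/
def lnom (n k : ℕ) : K := LFact n / (LFact k * LFact (n-k))

/-- The d-divisible Lucasnomial {n:d choose k:d}, as an element of the fraction field. -/
def lnomD (d n k : ℕ) : K := LFactD d n / (LFactD d k * LFactD d (n-k))

/-- The Lucas-Catalan number C_{n} = (1/{n+1}) {2n choose n}. -/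
def catL (n : ℕ) : K := lnom (2*n) n / L (n+1)

/-- The Lucas-Fuss-Catalan number C_{n,k} = (1/{kn+1}) {(k+1)n choose n}. -/
def fussCatL (n k : ℕ) : K := lnom ((k+1)*n) n / L (k*n+1)

/-! Since `{2m} = {m}·({m+1} + t{m-1})` and `{2} = s`, the quotient is `{m+2}({m+1} + t{m-1})/s`.
Every even-indexed `{2n}` is `s` times a polynomial in `ℕ[s,t]`; for `m` even this takes care of
`{m+2}`, and for `m` odd of both `{m+1}` and `{m-1}`. -/

theorem nonneg_add {p q : P2} (hp : Nonneg p) (hq : Nonneg q) : Nonneg (p + q) := fun m => by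
  rw [coeff_add]; exact add_nonneg (hp m) (hq m)

theorem nonneg_mul {p q : P2} (hp : Nonneg p) (hq : Nonneg q) : Nonneg (p * q) := fun m => by
  rw [coeff_mul]; exact sum_nonneg fun _ _ => mul_nonneg (hp _) (hq _)

theorem nonneg_X (i : Fin 2) : Nonneg (X i) := fun m => by
  rw [coeff_X]; split_ifs <;> norm_num

theorem nonneg_ps : Nonneg ps := nonneg_X 0

theorem nonneg_pt : Nonneg pt := nonneg_X 1

theorem lucas_nonneg : ∀ n, Nonneg (lucas n)
  | 0 => fun m => (coeff_zero m).ge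
  | 1 => fun m => by rw [lucas, coeff_one]; split_ifs <;> norm_num
  | n + 2 =>
    nonneg_add (nonneg_mul nonneg_ps (lucas_nonneg _)) (nonneg_mul nonneg_pt (lucas_nonneg _))

theorem lucas_two : lucas 2 = ps := by simp [lucas]

theorem lucas_add_add_one : ∀ a b : ℕ,
    lucas (a + b + 1) = lucas (a + 1) * lucas (b + 1) + pt * lucas a * lucas b
  | a, 0 => by simp [lucas]
  | a, b + 1 => by
    rw [show a + (b + 1) + 1 = (a + 1) + b + 1 by ring, lucas_add_add_one (a + 1) b, lucas, lucas]
    ring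

theorem exists_lucas_two_mul_eq_ps_mul : ∀ n, ∃ q, Nonneg q ∧ lucas (2 * n) = ps * q
  | 0 => ⟨0, fun m => (coeff_zero m).ge, by simp [lucas]⟩
  | n + 1 => by
    obtain ⟨q, hq, h⟩ := exists_lucas_two_mul_eq_ps_mul n
    refine ⟨lucas (2 * n + 1) + pt * q,
      nonneg_add (lucas_nonneg _) (nonneg_mul nonneg_pt hq), ?_⟩
    rw [show 2 * (n + 1) = 2 * n + 2 by ring, lucas, h]
    ring

/-- The companion Lucas sequence `{n+1} + t{n-1}`; at `n = 0` the truncated `n - 1` gives `{1}`,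
which is harmless since `{0} = 0`. -/
def lucasCompanion (n : ℕ) : P2 := lucas (n + 1) + pt * lucas (n - 1)

theorem lucasCompanion_nonneg (n : ℕ) : Nonneg (lucasCompanion n) :=
  nonneg_add (lucas_nonneg _) (nonneg_mul nonneg_pt (lucas_nonneg _))

theorem lucas_two_mul (n : ℕ) : lucas (2 * n) = lucas n * lucasCompanion n := by
  cases n with
  | zero => simp [lucas]
  | succ n =>
    rw [lucasCompanion, show 2 * (n + 1) = (n + 1) + n + 1 by ring, lucas_add_add_one]
    simp only [Nat.add_sub_cancel]
    ring

theorem exists_lucas_add_two_mul_lucasCompanion_eq_ps_mul (m : ℕ) :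
    ∃ q, Nonneg q ∧ lucas (m + 2) * lucasCompanion m = ps * q := by
  obtain ⟨k, rfl | rfl⟩ := Nat.even_or_odd' m
  · obtain ⟨q, hq, h⟩ := exists_lucas_two_mul_eq_ps_mul (k + 1)
    refine ⟨q * lucasCompanion (2 * k), nonneg_mul hq (lucasCompanion_nonneg _), ?_⟩
    rw [show 2 * k + 2 = 2 * (k + 1) by ring, h, mul_assoc]
  · obtain ⟨q₁, hq₁, h₁⟩ := exists_lucas_two_mul_eq_ps_mul (k + 1)
    obtain ⟨q₀, hq₀, h₀⟩ := exists_lucas_two_mul_eq_ps_mul k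
    refine ⟨lucas (2 * k + 1 + 2) * (q₁ + pt * q₀),
      nonneg_mul (lucas_nonneg _) (nonneg_add hq₁ (nonneg_mul nonneg_pt hq₀)), ?_⟩
    rw [lucasCompanion, show 2 * k + 1 + 1 = 2 * (k + 1) by ring, Nat.add_sub_cancel, h₁, h₀]
    ring

theorem coxeterCatalan_I2_general (m : ℕ) :
    ∃ p : P2, Nonneg p ∧ lucas (m+2) * lucas (2*m) = p * (lucas 2 * lucas m) := by
  obtain ⟨q, hq, h⟩ := exists_lucas_add_two_mul_lucasCompanion_eq_ps_mul m
  refine ⟨q, hq, ?_⟩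
  rw [lucas_two_mul, lucas_two, ← mul_assoc, mul_right_comm, h]
  ring

/-- for m ≥ 2, {2}{m} divides {m+2}{2m} with quotient
(Cat I_2(m)) in ℕ[s,t]. -/
theorem coxeterCatalan_I2 (m : ℕ) (hm : 2 ≤ m) :
    ∃ p : P2, Nonneg p ∧ lucas (m+2) * lucas (2*m) = p * (lucas 2 * lucas m) :=
  coxeterCatalan_I2_general m
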